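/- arXiv:1803.03182 — 3 statements merged into one kernel-verified Lean document; each statement's English description precedes it below -/
import Mathlib

section
/- Let G be a finite group and let g ∈ G be a real element of 2-defect zero, i.e., the centralizer C_G(g) has odd order. Then g is strongly real: there exists t ∈ G with t² = 1 and t * g * t⁻¹ = g⁻¹. -/
/-- A real element of 2-defect zero (odd centralizer order) is strongly real. -/
theorem stmt3 {G : Type*} [Group G] [Fintype G] (g : G)
    (hreal : ∃ x : G, x * g * x⁻¹ = g⁻¹)
    (hodd : Odd (Nat.card (Subgroup.centralizer ({g} : Set G)))) :
    ∃ t : G, t * t = 1 ∧ t * g * t⁻¹ = g⁻¹ := by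
  obtain ⟨x, hx⟩ := hreal
  have hcomm : Commute g (x * x) := by
    have h2 : (x * x) * g * (x * x)⁻¹ = g := by
      calc (x * x) * g * (x * x)⁻¹ = x * (x * g * x⁻¹) * x⁻¹ := by group
        _ = x * g⁻¹ * x⁻¹ := by rw [hx]
        _ = (x * g * x⁻¹)⁻¹ := by group
        _ = (g⁻¹)⁻¹ := by rw [hx]
        _ = g := inv_inv g
    have h3 : (x * x) * g = g * (x * x) := by
      conv_rhs => rw [← h2]
      group
    exact h3.symm
  have hmem : x * x ∈ Subgroup.centralizer ({g} : Set G) := by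
    rw [Subgroup.mem_centralizer_singleton_iff]
    exact hcomm.eq.symm
  set N := Nat.card (Subgroup.centralizer ({g} : Set G)) with hNdef
  have hN1 : (x * x) ^ N = 1 := by
    have h := pow_card_eq_one' (G := Subgroup.centralizer ({g} : Set G))
      (x := ⟨x * x, hmem⟩)
    have h2 := congrArg (Subtype.val) h
    simp only [SubmonoidClass.coe_pow, OneMemClass.coe_one] at h2
    exact h2
  obtain ⟨k, hk⟩ := hodd
  refine ⟨x ^ N, ?_, ?_⟩
  · rw [← ((Commute.refl x).mul_pow N), hN1]
  · have hxN : x ^ N = x * (x * x) ^ k := by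
      rw [hk, pow_succ', pow_mul, pow_two]
    have hkc : (x * x) ^ k * g * ((x * x) ^ k)⁻¹ = g := by
      rw [(hcomm.pow_right k).symm.eq, mul_inv_cancel_right]
    rw [hxN]
    calc x * (x * x) ^ k * g * (x * (x * x) ^ k)⁻¹
        = x * ((x * x) ^ k * g * ((x * x) ^ k)⁻¹) * x⁻¹ := by group
      _ = x * g * x⁻¹ := by rw [hkc]
      _ = g⁻¹ := hx
end

section
/- Let G be a finite group with a normal subgroup N of odd order such that G/N is a 2-group (G is 2-nilpotent with normal Hall 2'-subgroup N). If g ∈ N is inverted by some element x ∈ G (x * g * x⁻¹ = g⁻¹) and g has odd order, then g is inverted by some element whose order is a power of 2. -/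
/-!
If `x` inverts `g`, then `x ^ 2` centralizes `g`, so every odd power of `x` still inverts `g`.
Writing `orderOf x = 2 ^ a * m` with `m` odd, the odd power `x ^ m` has order `2 ^ a`.
-/

theorem pow_mul_mul_inv_pow_of_conj_eq_inv {G : Type*} [Group G] {x g : G}
    (h : x * g * x⁻¹ = g⁻¹) (k : ℕ) : x ^ k * g * (x ^ k)⁻¹ = g ^ ((-1 : ℤ) ^ k) := by
  induction k with
  | zero => simp
  | succ k ih =>
    calc x ^ (k + 1) * g * (x ^ (k + 1))⁻¹ = x * (x ^ k * g * (x ^ k)⁻¹) * x⁻¹ := by group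
      _ = (x * g * x⁻¹) ^ ((-1 : ℤ) ^ k) := by rw [ih, conj_zpow]
      _ = g ^ ((-1 : ℤ) ^ (k + 1)) := by rw [h, ← zpow_neg_one, ← zpow_mul, pow_succ, mul_comm]

theorem pow_mul_mul_inv_pow_of_conj_eq_inv_of_odd {G : Type*} [Group G] {x g : G}
    (h : x * g * x⁻¹ = g⁻¹) {k : ℕ} (hk : Odd k) : x ^ k * g * (x ^ k)⁻¹ = g⁻¹ := by
  rw [pow_mul_mul_inv_pow_of_conj_eq_inv h, hk.neg_one_pow, zpow_neg_one]

theorem IsOfFinOrder.exists_orderOf_pow_eq_ordProj {M : Type*} [Monoid M] {x : M}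
    (hx : IsOfFinOrder x) {p : ℕ} (hp : p.Prime) :
    ∃ m, ¬p ∣ m ∧ orderOf (x ^ m) = p ^ (orderOf x).factorization p := by
  have hx0 : orderOf x ≠ 0 := hx.orderOf_pos.ne'
  exact ⟨ordCompl[p] (orderOf x), Nat.not_dvd_ordCompl hp hx0,
    orderOf_pow_orderOf_div hx0 (Nat.ordProj_dvd _ _)⟩

theorem stmt5_general {G : Type*} [Group G] [Fintype G]
    (g : G)
    (hreal : ∃ x : G, x * g * x⁻¹ = g⁻¹) :
    ∃ y : G, (∃ k : ℕ, orderOf y = 2 ^ k) ∧ y * g * y⁻¹ = g⁻¹ := by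
  obtain ⟨x, hx⟩ := hreal
  obtain ⟨m, hm, hord⟩ := (isOfFinOrder_of_finite x).exists_orderOf_pow_eq_ordProj Nat.prime_two
  exact ⟨x ^ m, ⟨_, hord⟩,
    pow_mul_mul_inv_pow_of_conj_eq_inv_of_odd hx (Nat.odd_iff.mpr (Nat.two_dvd_ne_zero.mp hm))⟩

/-- In a 2-nilpotent group (normal odd-order `N` with `G/N` a 2-group), a real
element `g ∈ N` of odd order is inverted by some element of 2-power order. -/
theorem stmt5 {G : Type*} [Group G] [Fintype G] (N : Subgroup G) [N.Normal]
    (hN : Odd (Nat.card N)) (hquot : IsPGroup 2 (G ⧸ N))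
    (g : G) (hg : g ∈ N) (hgodd : Odd (orderOf g))
    (hreal : ∃ x : G, x * g * x⁻¹ = g⁻¹) :
    ∃ y : G, (∃ k : ℕ, orderOf y = 2 ^ k) ∧ y * g * y⁻¹ = g⁻¹ :=
  stmt5_general g hreal
end

section
/- Let G be a finite group, k a field of characteristic 2 that is a splitting field for G, and M a nontrivial self-dual simple kG-module. Then there exists a nondegenerate G-invariant alternating (symplectic) bilinear form on M, unique up to scalar (Fong's Lemma). In particular dim_k M is even. -/
/-!
The self-duality `e : V ≃ Vᵛ` is a nondegenerate invariant form `B`. By Schur's lemma every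
invariant form is a multiple of `B`; for the transpose of `B` the multiple `c` satisfies `c² = 1`,
so `c = 1` in characteristic 2 and `B` is symmetric. In characteristic 2 the map `x ↦ B x x` of a
symmetric form is additive, so its zeros form an invariant subspace. It contains `g v + v`, since
`B (g v) (g v) = B v v`, and this vector is nonzero for some `g, v` as the action is nontrivial;
by simplicity the subspace is all of `V`, i.e. `B` is alternating. Finally a maximal totally
isotropic subspace `L` of a nondegenerate alternating form equals `Lᗮ`, so `dim V = 2 dim L`.
-/

open Module
open LinearMap (BilinForm)

namespace LinearMap.BilinForm

section Alternating

variable {K V : Type*} [Field K] [AddCommGroup V] [Module K V] [FiniteDimensional K V]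
  {B : BilinForm K V}

theorem IsAlt.exists_orthogonal_eq_self (hB : B.IsAlt) :
    ∃ L : Submodule K V, B.orthogonal L = L := by
  obtain ⟨L, hL, hmax⟩ := set_has_maximal_iff_noetherian.2 inferInstance
    {L : Submodule K V | L ≤ B.orthogonal L} ⟨⊥, bot_le (a := B.orthogonal ⊥)⟩
  refine ⟨L, le_antisymm (fun v hv => ?_) hL⟩
  -- Since `B v v = 0`, adjoining `v ∈ Lᗮ` to `L` keeps it totally isotropic.
  have hL' : L ⊔ Submodule.span K {v} ≤ B.orthogonal (L ⊔ Submodule.span K {v}) := by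
    intro x hx
    rw [mem_orthogonal_iff]
    intro y hy
    obtain ⟨a, ha, x', hx', rfl⟩ := Submodule.mem_sup.1 hx
    obtain ⟨b, hb, y', hy', rfl⟩ := Submodule.mem_sup.1 hy
    obtain ⟨s, rfl⟩ := Submodule.mem_span_singleton.1 hx'
    obtain ⟨t, rfl⟩ := Submodule.mem_span_singleton.1 hy'
    have hv' := mem_orthogonal_iff.1 hv
    have hba : B b a = 0 := mem_orthogonal_iff.1 (hL ha) b hb
    have hvb : B b v = 0 := hv' b hb
    have hva : B v a = 0 := hB.isRefl _ _ (hv' a ha)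
    simp [hba, hvb, hva, hB v]
  by_contra hvL
  exact hmax _ hL' (lt_of_le_of_ne le_sup_left fun h =>
    hvL (h ▸ Submodule.mem_sup_right (Submodule.mem_span_singleton_self v)))

theorem IsAlt.even_finrank (hB : B.IsAlt) (hnd : B.Nondegenerate) : Even (finrank K V) := by
  obtain ⟨L, hL⟩ := hB.exists_orthogonal_eq_self
  have h := finrank_orthogonal hnd L
  rw [hL] at h
  have := Submodule.finrank_le L
  exact ⟨finrank K L, by omega⟩

end Alternating

section CharTwo

variable {R M : Type*} [CommRing R] [CharP R 2] [AddCommGroup M] [Module R M]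
  {B : BilinForm R M}

theorem IsSymm.apply_add_add_of_charTwo (hB : B.IsSymm) (x y : M) :
    B (x + y) (x + y) = B x x + B y y := by
  simp only [map_add, LinearMap.add_apply, hB.eq y x]
  linear_combination CharTwo.add_self_eq_zero (B x y)

def IsSymm.isotropicSubmodule (hB : B.IsSymm) : Submodule R M where
  carrier := {x | B x x = 0}
  add_mem' {x y} (hx : B x x = 0) (hy : B y y = 0) :=
    show B (x + y) (x + y) = 0 by rw [hB.apply_add_add_of_charTwo, hx, hy, add_zero]
  zero_mem' := by simp
  smul_mem' a x (hx : B x x = 0) := show B (a • x) (a • x) = 0 by simp [hx]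

end CharTwo

end LinearMap.BilinForm

namespace Representation

variable {k G V : Type*} [Field k] [Group G] [AddCommGroup V] [Module k V]
  (ρ : Representation k G V)

theorem isIrreducible_of_forall_map_le [Nontrivial V]
    (h : ∀ W : Submodule k V, (∀ g : G, W.map (ρ g) ≤ W) → W = ⊥ ∨ W = ⊤) :
    ρ.IsIrreducible where
  exists_pair_ne := ⟨⊥, ⊤, fun h =>
    bot_ne_top (α := Submodule k V) (congrArg Subrepresentation.toSubmodule h)⟩
  eq_bot_or_eq_top W := by
    refine (h W.toSubmodule fun g => Submodule.map_le_iff_le_comap.2 fun v hv =>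
      W.apply_mem_toSubmodule g hv).imp (fun hW => ?_) (fun hW => ?_) <;>
    exact Subrepresentation.toSubmodule_injective hW

def IsInvariantForm (B : BilinForm k V) : Prop :=
  ∀ (g : G) (x y : V), B (ρ g x) (ρ g y) = B x y

variable {ρ}

theorem IsInvariantForm.apply_left {B : BilinForm k V} (hB : ρ.IsInvariantForm B) (g : G)
    (x y : V) : B (ρ g x) y = B x (ρ g⁻¹ y) := by
  rw [← hB g⁻¹, ← Module.End.mul_apply, ← map_mul, inv_mul_cancel, map_one,
    Module.End.one_apply]

section Schur

variable [ρ.IsIrreducible] [IsAlgClosed k] [FiniteDimensional k V]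

theorem IsIrreducible.exists_eq_smul_id {f : V →ₗ[k] V}
    (hf : ∀ g v, f (ρ g v) = ρ g (f v)) : ∃ c : k, f = c • LinearMap.id := by
  obtain ⟨c, hc⟩ := IsIrreducible.algebraMap_intertwiningMap_bijective_of_isAlgClosed.2
    (f.intertwiningMap_of_isIntertwiningMap ρ ρ hf)
  exact ⟨c, LinearMap.ext fun v => by simpa using (congrArg (· v) hc).symm⟩

theorem IsInvariantForm.exists_eq_smul {B C : BilinForm k V} (hB : ρ.IsInvariantForm B)
    (hnd : B.Nondegenerate) (hC : ρ.IsInvariantForm C) : ∃ c : k, C = c • B := by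
  obtain ⟨c, hc⟩ := IsIrreducible.exists_eq_smul_id (ρ := ρ)
    (f := (B.toDual hnd).symm.toLinearMap ∘ₗ C)
    fun g v => (B.toDual hnd).injective <| LinearMap.ext fun w => by
      simp [LinearMap.BilinForm.toDual_def, hB.apply_left, hC.apply_left]
  refine ⟨c, LinearMap.ext fun v => LinearMap.ext fun w => ?_⟩
  simpa using congrArg (fun f => B (f v) w) hc

theorem IsInvariantForm.isSymm_of_charTwo [CharP k 2] {B : BilinForm k V}
    (hB : ρ.IsInvariantForm B) (hnd : B.Nondegenerate) : B.IsSymm := by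
  obtain ⟨c, hc⟩ := hB.exists_eq_smul hnd (C := B.flip) fun g x y => hB g y x
  have hflip : ∀ x y, B y x = c * B x y := fun x y => by simpa using congrArg (· x y) hc
  refine ⟨fun x y => ?_⟩
  by_cases hxy : B x y = 0
  · rw [hxy, hflip, hxy, mul_zero]
  have hc_sq : c ^ 2 = 1 ^ 2 := mul_right_cancel₀ hxy <| by
    rw [one_pow, one_mul, sq, mul_assoc, ← hflip, ← hflip]
  rw [hflip y x, CharTwo.sq_inj.1 hc_sq, one_mul]

end Schur

theorem IsInvariantForm.isAlt_of_charTwo [CharP k 2] [ρ.IsIrreducible] {B : BilinForm k V}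
    (hB : ρ.IsInvariantForm B) (hsymm : B.IsSymm) (hρ : ∃ g v, ρ g v ≠ v) : B.IsAlt := by
  obtain ⟨g, v, hgv⟩ := hρ
  let W : Subrepresentation ρ := ⟨hsymm.isotropicSubmodule,
    fun g x (hx : B x x = 0) => show B (ρ g x) (ρ g x) = 0 by rw [hB, hx]⟩
  have hW : W ≠ ⊥ := fun h => hgv <| by
    have hmem : ρ g v + v ∈ W := show B _ _ = 0 by
      rw [hsymm.apply_add_add_of_charTwo, hB, CharTwo.add_self_eq_zero]
    rw [h] at hmem
    rw [eq_neg_of_add_eq_zero_left ((Submodule.mem_bot k).1 hmem), ← neg_one_smul k v,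
      CharTwo.neg_eq, one_smul]
  have hWtop := (IsSimpleOrder.eq_bot_or_eq_top W).resolve_left hW
  exact fun x => show x ∈ W by rw [hWtop]; trivial

end Representation

theorem stmt16_general (k : Type*) [Field k] [IsAlgClosed k] (hchar : CharP k 2)
    {G : Type*} [Group G]
    (V : Type*) [AddCommGroup V] [Module k V] [FiniteDimensional k V]
    (ρ : Representation k G V)
    (hsimple : Nontrivial V ∧ ∀ W : Submodule k V,
      (∀ g : G, W.map (ρ g) ≤ W) → W = ⊥ ∨ W = ⊤)
    (hselfdual : ∃ e : V ≃ₗ[k] Module.Dual k V,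
      ∀ (g : G) (v w : V), e (ρ g v) w = e v (ρ g⁻¹ w))
    (hnontrivaction : ∃ (g : G) (v : V), ρ g v ≠ v) :
    ∃ B : V →ₗ[k] V →ₗ[k] k,
      (∀ v : V, B v v = 0) ∧
      (∀ (g : G) (x y : V), B (ρ g x) (ρ g y) = B x y) ∧
      LinearMap.BilinForm.Nondegenerate B ∧
      (∀ B' : V →ₗ[k] V →ₗ[k] k,
        (∀ v : V, B' v v = 0) →
        (∀ (g : G) (x y : V), B' (ρ g x) (ρ g y) = B' x y) →
        LinearMap.BilinForm.Nondegenerate B' →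
        ∃ c : k, c ≠ 0 ∧ B' = c • B) ∧
      Even (Module.finrank k V) := by
  obtain ⟨_, hsimple⟩ := hsimple
  have := ρ.isIrreducible_of_forall_map_le hsimple
  obtain ⟨e, he⟩ := hselfdual
  let B : LinearMap.BilinForm k V := e.toLinearMap
  have hnd : B.Nondegenerate := LinearMap.BilinForm.nondegenerate_iff_ker_eq_bot.2 e.ker
  have hB : ρ.IsInvariantForm B := fun g x y => by
    simp [B, he, ← Module.End.mul_apply, ← map_mul]
  have halt : B.IsAlt := hB.isAlt_of_charTwo (hB.isSymm_of_charTwo hnd) hnontrivaction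
  refine ⟨B, halt, hB, hnd, fun B' _ hB' hnd' => ?_, halt.even_finrank hnd⟩
  obtain ⟨c, rfl⟩ := hB.exists_eq_smul hnd hB'
  exact ⟨c, by rintro rfl; exact hnd'.ne_zero (zero_smul k B), rfl⟩

/-- Fong's Lemma: over an algebraically closed field of characteristic 2, a
nontrivial self-dual simple module of a finite group carries a nondegenerate
`G`-invariant alternating bilinear form, unique up to a nonzero scalar; in
particular its dimension is even. -/
theorem stmt16 (k : Type*) [Field k] [IsAlgClosed k] (hchar : CharP k 2)
    {G : Type*} [Group G] [Fintype G]
    (V : Type*) [AddCommGroup V] [Module k V] [FiniteDimensional k V]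
    (ρ : Representation k G V)
    (hsimple : Nontrivial V ∧ ∀ W : Submodule k V,
      (∀ g : G, W.map (ρ g) ≤ W) → W = ⊥ ∨ W = ⊤)
    (hselfdual : ∃ e : V ≃ₗ[k] Module.Dual k V,
      ∀ (g : G) (v w : V), e (ρ g v) w = e v (ρ g⁻¹ w))
    (hnontrivaction : ∃ (g : G) (v : V), ρ g v ≠ v) :
    ∃ B : V →ₗ[k] V →ₗ[k] k,
      (∀ v : V, B v v = 0) ∧
      (∀ (g : G) (x y : V), B (ρ g x) (ρ g y) = B x y) ∧
      LinearMap.BilinForm.Nondegenerate B ∧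
      (∀ B' : V →ₗ[k] V →ₗ[k] k,
        (∀ v : V, B' v v = 0) →
        (∀ (g : G) (x y : V), B' (ρ g x) (ρ g y) = B' x y) →
        LinearMap.BilinForm.Nondegenerate B' →
        ∃ c : k, c ≠ 0 ∧ B' = c • B) ∧
      Even (Module.finrank k V) :=
  stmt16_general k hchar V ρ hsimple hselfdual hnontrivaction
end
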